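/- Let C be an n×n generalized Cartan matrix of finite Dynkin type with b_i the row sums of C⁻¹, and fix a period p ≥ 1. The set of p-periodic positive integral friezes for C is finite, with cardinality at most 2^(p²·∑_i b_i) — more simply, at most ∏_i (2^(p·b_i))^p. -/

import Mathlib

/-!
Taking logarithms, the mesh relation gives
`log F(i,k) + log F(i,k+1) ≤ log 2 + ∑_{j ≠ i} (-C i j) log F(j, ·)`, because both products are
at least `1`. Summed over a period, the shifts cancel and the vector `S` of period sums of
`log F` satisfies `C S ≤ p log 2` componentwise. As `C⁻¹` has nonnegative entries,
`S ≤ p log 2 · C⁻¹ 1 = p log 2 · b`, and every `log F(i,k)` is at most `S i`. Thus all values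
lie in `[1, 2^(p b_i)]`; as a periodic frieze is determined by its values on one period, there
are at most `∏ᵢ (2^(p b_i))^p` of them.
-/

open Finset Matrix Function

section Periodic

variable {p : ℕ}

theorem Function.Periodic.eq_toNat_emod {α : Type*} {f : ℤ → α} (hf : Periodic f p) (hp : 0 < p)
    (k : ℤ) : f k = f (k % p).toNat := by
  rw [Int.toNat_of_nonneg (Int.emod_nonneg k (by omega)), Int.emod_def, mul_comm]
  exact (hf.sub_int_mul_eq _).symm

theorem Int.toNat_emod_natCast_lt (hp : 0 < p) (k : ℤ) : (k % p).toNat < p := by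
  have := Int.emod_lt_of_pos k (Int.natCast_pos.2 hp)
  omega

theorem Function.Periodic.le_sum_range {M : Type*} [AddCommMonoid M] [PartialOrder M]
    [IsOrderedAddMonoid M] {f : ℤ → M} (hf : Periodic f p) (hp : 0 < p) (hf0 : ∀ k, 0 ≤ f k)
    (k : ℤ) : f k ≤ ∑ m ∈ range p, f m := by
  rw [hf.eq_toNat_emod hp]
  exact single_le_sum (f := fun m : ℕ => f m) (fun m _ => hf0 m)
    (mem_range.2 (Int.toNat_emod_natCast_lt hp k))

theorem Function.Periodic.sum_range_add_one {M : Type*} [AddCancelCommMonoid M] {f : ℤ → M}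
    (hf : Periodic f p) : ∑ m ∈ range p, f (m + 1) = ∑ m ∈ range p, f m := by
  have hshift := sum_range_succ' (fun m : ℕ => f m) p
  rw [sum_range_succ, show f p = f 0 by simpa using hf 0] at hshift
  push_cast at hshift
  exact (add_right_cancel hshift).symm

end Periodic

theorem Finset.sum_univ_eq_add_sum_lt_add_sum_gt {ι M : Type*} [Fintype ι] [LinearOrder ι]
    [AddCommMonoid M] (f : ι → M) (i : ι) :
    ∑ j, f j = f i + (∑ j ∈ univ.filter (· < i), f j + ∑ j ∈ univ.filter (i < ·), f j) := by
  rw [Fintype.sum_eq_add_sum_compl i, ← sum_union (disjoint_filter.2 fun j _ h h' => h.asymm h')]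
  congr 2
  ext j
  simp [lt_or_lt_iff_ne]

theorem Matrix.le_mul_sum_inv_of_mulVec_le {ι R : Type*} [Fintype ι] [DecidableEq ι] [Field R]
    [LinearOrder R] [IsStrictOrderedRing R] {M : Matrix ι ι R} (hM : IsUnit M.det)
    (hinv : ∀ i j, 0 ≤ M⁻¹ i j) {v : ι → R} {c : R} (h : ∀ j, (M *ᵥ v) j ≤ c) (i : ι) :
    v i ≤ c * ∑ j, M⁻¹ i j :=
  calc v i = (M⁻¹ *ᵥ (M *ᵥ v)) i := by rw [mulVec_mulVec, nonsing_inv_mul M hM, one_mulVec]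
    _ ≤ ∑ j, M⁻¹ i j * c := sum_le_sum fun j _ => mul_le_mul_of_nonneg_left (h j) (hinv i j)
    _ = c * ∑ j, M⁻¹ i j := by rw [← sum_mul, mul_comm]

section Cartan

variable {ι : Type*} [Fintype ι] [LinearOrder ι]

theorem cartan_mulVec_apply {C : Matrix ι ι ℤ} (hdiag : ∀ i, C i i = 2)
    (hoff : ∀ i j, i ≠ j → C i j ≤ 0) (v : ι → ℝ) (i : ι) :
    (C.map (Int.cast : ℤ → ℝ) *ᵥ v) i = 2 * v i -
      (∑ j ∈ univ.filter (· < i), ((-C i j).toNat : ℝ) * v j +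
        ∑ j ∈ univ.filter (i < ·), ((-C i j).toNat : ℝ) * v j) := by
  have hoffR : ∀ j, j ≠ i → (C i j : ℝ) * v j = -(((-C i j).toNat : ℝ) * v j) := fun j hj => by
    have hC : (C i j : ℝ) = -((-C i j).toNat : ℝ) := by
      have := hoff i j hj.symm
      exact_mod_cast (show C i j = -((-C i j).toNat : ℤ) by omega)
    rw [hC, neg_mul]
  simp only [mulVec, dotProduct, map_apply]
  rw [sum_univ_eq_add_sum_lt_add_sum_gt _ i,
    sum_congr rfl fun j hj => hoffR j (mem_filter.1 hj).2.ne,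
    sum_congr rfl fun j hj => hoffR j (mem_filter.1 hj).2.ne', hdiag, sum_neg_distrib,
    sum_neg_distrib]
  push_cast
  ring

theorem two_mul_sum_range_le {x : ι → ℤ → ℝ} {p : ℕ} (hx : ∀ i, Periodic (x i) p)
    (a : ι → ι → ℝ) (c : ℝ)
    (hmesh : ∀ i k, x i k + x i (k + 1) ≤ c + ∑ j ∈ univ.filter (· < i), a i j * x j k +
      ∑ j ∈ univ.filter (i < ·), a i j * x j (k + 1)) (i : ι) :
    2 * ∑ m ∈ range p, x i m ≤ p * c +
      ∑ j ∈ univ.filter (· < i), a i j * ∑ m ∈ range p, x j m +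
      ∑ j ∈ univ.filter (i < ·), a i j * ∑ m ∈ range p, x j m := by
  have hsum := sum_le_sum fun (m : ℕ) (_ : m ∈ range p) => hmesh i m
  simp only [sum_add_distrib, (hx _).sum_range_add_one, sum_const, card_range, nsmul_eq_mul] at hsum
  rw [sum_comm (s := range p), sum_comm (s := range p)] at hsum
  simp only [← mul_sum, (hx _).sum_range_add_one] at hsum ⊢
  linarith

end Cartan

theorem Real.log_prod_pow {ι : Type*} (s : Finset ι) (g : ι → ℝ) (e : ι → ℕ)
    (hg : ∀ j ∈ s, g j ≠ 0) : Real.log (∏ j ∈ s, g j ^ e j) = ∑ j ∈ s, e j * Real.log (g j) := by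
  rw [Real.log_prod fun j hj => pow_ne_zero _ (hg j hj)]
  simp only [Real.log_pow]

theorem Real.log_add_log_le_of_mul_eq_one_add {x y P Q : ℝ} (hx : 0 < x) (hy : 0 < y)
    (hP : 1 ≤ P) (hQ : 1 ≤ Q) (h : x * y = 1 + P * Q) :
    Real.log x + Real.log y ≤ Real.log 2 + Real.log P + Real.log Q := by
  rw [← Real.log_mul hx.ne' hy.ne', ← Real.log_mul two_ne_zero (by positivity),
    ← Real.log_mul (by positivity) (by positivity)]
  exact Real.log_le_log (by positivity) (by rw [h]; nlinarith)

def IsPeriodicFrieze {n : ℕ} (C : Matrix (Fin n) (Fin n) ℤ) (p : ℕ) (F : Fin n × ℤ → ℤ) : Prop :=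
  (∀ i k, 1 ≤ F (i, k)) ∧
  (∀ i (k : ℤ), F (i, k + p) = F (i, k)) ∧
  (∀ i (k : ℤ), F (i, k) * F (i, k + 1) =
    1 + (∏ j ∈ univ.filter (· < i), F (j, k) ^ (-C i j).toNat) *
      (∏ j ∈ univ.filter (i < ·), F (j, k + 1) ^ (-C i j).toNat))

namespace IsPeriodicFrieze

variable {n : ℕ} {C : Matrix (Fin n) (Fin n) ℤ} {p : ℕ} {F : Fin n × ℤ → ℤ}

theorem one_le_cast (hF : IsPeriodicFrieze C p F) (i : Fin n) (k : ℤ) : (1 : ℝ) ≤ F (i, k) := by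
  exact_mod_cast hF.1 i k

theorem log_mesh_le (hF : IsPeriodicFrieze C p F) (i : Fin n) (k : ℤ) :
    Real.log (F (i, k)) + Real.log (F (i, k + 1)) ≤ Real.log 2 +
      ∑ j ∈ univ.filter (· < i), ((-C i j).toNat : ℝ) * Real.log (F (j, k)) +
      ∑ j ∈ univ.filter (i < ·), ((-C i j).toNat : ℝ) * Real.log (F (j, k + 1)) := by
  have hpos : ∀ i k, (0 : ℝ) < F (i, k) := fun i k => one_pos.trans_le (hF.one_le_cast i k)
  have hmesh : ((F (i, k) * F (i, k + 1) : ℤ) : ℝ) = _ := congrArg (Int.cast : ℤ → ℝ) (hF.2.2 i k)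
  push_cast at hmesh
  have hprod : ∀ (s : Finset (Fin n)) (k : ℤ), (1 : ℝ) ≤ ∏ j ∈ s, (F (j, k) : ℝ) ^ (-C i j).toNat :=
    fun s k => one_le_prod fun j _ => one_le_pow₀ (hF.one_le_cast j k)
  rw [← Real.log_prod_pow _ _ _ fun j _ => (hpos j k).ne',
    ← Real.log_prod_pow _ _ _ fun j _ => (hpos j (k + 1)).ne']
  exact Real.log_add_log_le_of_mul_eq_one_add (hpos i k) (hpos i (k + 1)) (hprod _ k)
    (hprod _ (k + 1)) hmesh

theorem periodic_log (hF : IsPeriodicFrieze C p F) (i : Fin n) :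
    Periodic (fun k : ℤ => Real.log (F (i, k))) p := fun k => by
  simp only [hF.2.1 i k]

theorem le_two_rpow (hF : IsPeriodicFrieze C p F) (hdiag : ∀ i, C i i = 2)
    (hoff : ∀ i j, i ≠ j → C i j ≤ 0) (hC : IsUnit (C.map (Int.cast : ℤ → ℝ)).det)
    (hinv : ∀ i j, 0 ≤ (C.map (Int.cast : ℤ → ℝ))⁻¹ i j) (hp : 0 < p) (i : Fin n) (k : ℤ) :
    (F (i, k) : ℝ) ≤ 2 ^ ((p : ℝ) * ∑ j, (C.map (Int.cast : ℤ → ℝ))⁻¹ i j) := by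
  set S : Fin n → ℝ := fun j => ∑ m ∈ range p, Real.log (F (j, m))
  have hCS : ∀ j, (C.map (Int.cast : ℤ → ℝ) *ᵥ S) j ≤ p * Real.log 2 := fun j => by
    rw [cartan_mulVec_apply hdiag hoff]
    linarith [two_mul_sum_range_le hF.periodic_log _ _ hF.log_mesh_le j]
  have hlogF : Real.log (F (i, k)) ≤ S i :=
    (hF.periodic_log i).le_sum_range hp (fun m => Real.log_nonneg (hF.one_le_cast i m)) k
  have hS := le_mul_sum_inv_of_mulVec_le hC hinv hCS i
  rw [Real.le_rpow_iff_log_le (one_pos.trans_le (hF.one_le_cast i k)) two_pos]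
  linarith

end IsPeriodicFrieze

section Counting

variable {ι : Type*}

def boundedPeriodicFunctions (B : ι → ℕ) (p : ℕ) : Set (ι × ℤ → ℤ) :=
  {F | (∀ i k, 1 ≤ F (i, k) ∧ F (i, k) ≤ B i) ∧ ∀ i, Periodic (fun k => F (i, k)) p}

variable {p : ℕ}

theorem injOn_restrict_boundedPeriodicFunctions (B : ι → ℕ) (hp : 0 < p) :
    Set.InjOn (fun F (q : ι × Fin p) => F (q.1, q.2)) (boundedPeriodicFunctions B p) := by
  intro F hF G hG hFG
  ext ⟨i, k⟩
  rw [show F (i, k) = _ from (hF.2 i).eq_toNat_emod hp k,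
    show G (i, k) = _ from (hG.2 i).eq_toNat_emod hp k]
  exact congrFun hFG (i, ⟨_, Int.toNat_emod_natCast_lt hp k⟩)

theorem mapsTo_restrict_boundedPeriodicFunctions [Fintype ι] [DecidableEq ι] (B : ι → ℕ) :
    Set.MapsTo (fun F (q : ι × Fin p) => F (q.1, q.2)) (boundedPeriodicFunctions B p)
      (Fintype.piFinset fun q : ι × Fin p => Icc (1 : ℤ) (B q.1)) :=
  fun _ hF => mem_coe.2 (Fintype.mem_piFinset.2 fun q => mem_Icc.2 (hF.1 q.1 q.2))

theorem finite_boundedPeriodicFunctions [Fintype ι] [DecidableEq ι] (B : ι → ℕ) (hp : 0 < p) :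
    (boundedPeriodicFunctions B p).Finite :=
  .of_injOn (mapsTo_restrict_boundedPeriodicFunctions B)
    (injOn_restrict_boundedPeriodicFunctions B hp) (finite_toSet _)

theorem ncard_boundedPeriodicFunctions_le [Fintype ι] [DecidableEq ι] (B : ι → ℕ) (hp : 0 < p) :
    (boundedPeriodicFunctions B p).ncard ≤ ∏ i, B i ^ p := by
  refine (Set.ncard_le_ncard_of_injOn _ (mapsTo_restrict_boundedPeriodicFunctions B)
    (injOn_restrict_boundedPeriodicFunctions B hp) (finite_toSet _)).trans_eq ?_
  rw [Set.ncard_coe_finset, Fintype.card_piFinset, Fintype.prod_prod_type]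
  simp [Int.card_Icc]

end Counting

open Finset in
/-- The set of p-periodic positive integral friezes for a generalized Cartan
matrix C of finite Dynkin type is finite, with cardinality at most
2^(p²·∑ᵢ bᵢ), where bᵢ is the i-th row sum of C⁻¹. -/
theorem stmt_12 {n : ℕ} (C : Matrix (Fin n) (Fin n) ℤ)
    (hdiag : ∀ i, C i i = 2) (hoff : ∀ i j, i ≠ j → C i j ≤ 0)
    (hC : IsUnit (C.map (Int.cast : ℤ → ℝ)).det)
    (hinv : ∀ i j, 0 < (C.map (Int.cast : ℤ → ℝ))⁻¹ i j)
    (b : Fin n → ℝ) (hb : ∀ i, b i = ∑ j, (C.map (Int.cast : ℤ → ℝ))⁻¹ i j)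
    (p : ℕ) (hp : 1 ≤ p) :
    ({F : Fin n × ℤ → ℤ |
        (∀ i k, 1 ≤ F (i, k)) ∧
        (∀ i (k : ℤ), F (i, k + p) = F (i, k)) ∧
        (∀ i (k : ℤ), F (i, k) * F (i, k + 1) =
          1 + (∏ j ∈ univ.filter (· < i), F (j, k) ^ (-C i j).toNat) *
              (∏ j ∈ univ.filter (i < ·), F (j, k + 1) ^ (-C i j).toNat))}).Finite ∧
    (({F : Fin n × ℤ → ℤ |
        (∀ i k, 1 ≤ F (i, k)) ∧
        (∀ i (k : ℤ), F (i, k + p) = F (i, k)) ∧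
        (∀ i (k : ℤ), F (i, k) * F (i, k + 1) =
          1 + (∏ j ∈ univ.filter (· < i), F (j, k) ^ (-C i j).toNat) *
              (∏ j ∈ univ.filter (i < ·), F (j, k + 1) ^ (-C i j).toNat))}).ncard : ℝ)
      ≤ 2 ^ ((p : ℝ) ^ 2 * ∑ i, b i) := by
  change {F | IsPeriodicFrieze C p F}.Finite ∧ ({F | IsPeriodicFrieze C p F}.ncard : ℝ) ≤ _
  set B : Fin n → ℕ := fun i => ⌊(2 : ℝ) ^ ((p : ℝ) * b i)⌋₊
  have hsub : {F | IsPeriodicFrieze C p F} ⊆ boundedPeriodicFunctions B p := fun F hF =>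
    ⟨fun i k => ⟨hF.1 i k, by
      rw [Int.natCast_floor_eq_floor (by positivity), Int.le_floor, hb i]
      exact hF.le_two_rpow hdiag hoff hC (fun i j => (hinv i j).le) hp i k⟩, hF.2.1⟩
  have hfin := finite_boundedPeriodicFunctions B hp
  refine ⟨hfin.subset hsub, ?_⟩
  calc _ ≤ ((∏ i, B i ^ p : ℕ) : ℝ) := by
        exact_mod_cast (Set.ncard_le_ncard hsub hfin).trans (ncard_boundedPeriodicFunctions_le B hp)
    _ ≤ ∏ i, ((2 : ℝ) ^ ((p : ℝ) * b i)) ^ p := by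
        push_cast
        gcongr
        exact Nat.floor_le (by positivity)
    _ = 2 ^ ((p : ℝ) ^ 2 * ∑ i, b i) := by
        rw [mul_sum, Real.rpow_sum_of_pos two_pos]
        refine prod_congr rfl fun i _ => ?_
        rw [← Real.rpow_natCast, ← Real.rpow_mul zero_le_two]
        ring_nf
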